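/- arXiv:2101.04150 — 3 statements merged into one kernel-verified Lean document; each statement's English description precedes it below -/
import Mathlib

section
/- The sum of all entries of an m × n sign-restricted matrix is at most n, and this maximum is attained. -/
open Finset

/-- A sign-restricted matrix: entries in {0,1,-1}, every partial column sum
(from row 1 down) equals 0 or 1, every partial row sum (from column 1) is nonnegative. -/
def IsSRM {m n : ℕ} (A : Matrix (Fin m) (Fin n) ℤ) : Prop :=
  (∀ i j, A i j = 0 ∨ A i j = 1 ∨ A i j = -1) ∧
  (∀ i j, (∑ k ∈ Finset.Iic i, A k j) = 0 ∨ (∑ k ∈ Finset.Iic i, A k j) = 1) ∧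
  (∀ i j, 0 ≤ ∑ l ∈ Finset.Iic j, A i l)

namespace IsSRM

variable {m n : ℕ} {A : Matrix (Fin m) (Fin n) ℤ}

theorem sum_col_le_one (hA : IsSRM A) (j : Fin n) : ∑ i, A i j ≤ 1 := by
  cases m with
  | zero => simp
  | succ k =>
    rw [← Finset.Iic_top]
    rcases hA.2.1 ⊤ j with h | h <;> omega

theorem sum_le (hA : IsSRM A) : ∑ i, ∑ j, A i j ≤ n := by
  refine Finset.sum_comm.trans_le ?_
  simpa using Finset.sum_le_card_nsmul univ _ 1 fun j _ => hA.sum_col_le_one j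

end IsSRM

def firstRowOnes (m n : ℕ) : Matrix (Fin (m + 1)) (Fin n) ℤ :=
  Matrix.of fun i _ => if i = 0 then 1 else 0

theorem isSRM_firstRowOnes (m n : ℕ) : IsSRM (firstRowOnes m n) := by
  refine ⟨fun i j => ?_, fun i j => Or.inr ?_, fun i j => ?_⟩
  · by_cases h : i = 0 <;> simp [firstRowOnes, h]
  · simp [firstRowOnes, Finset.sum_ite_eq']
  · refine Finset.sum_nonneg fun l _ => ?_
    simp only [firstRowOnes, Matrix.of_apply]
    split_ifs <;> norm_num

theorem sum_firstRowOnes (m n : ℕ) : ∑ i, ∑ j, firstRowOnes m n i j = n := by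
  simp [firstRowOnes]

/-- the sum of all entries of an m×n SRM is at most n, and the maximum is
attained (for m ≥ 1). -/
theorem stmt4 (m n : ℕ) (hm : 0 < m) :
    (∀ A : Matrix (Fin m) (Fin n) ℤ, IsSRM A → (∑ i, ∑ j, A i j) ≤ n) ∧
    (∃ A : Matrix (Fin m) (Fin n) ℤ, IsSRM A ∧ (∑ i, ∑ j, A i j) = n) := by
  obtain ⟨k, rfl⟩ : ∃ k, m = k + 1 := ⟨m - 1, by omega⟩
  exact ⟨fun _ hA => hA.sum_le, firstRowOnes k n, isSRM_firstRowOnes k n, sum_firstRowOnes k n⟩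
end

section
/- The Bruhat order on m × n sign-restricted matrices, defined by A ≤_B B iff Σ(A) ≥ Σ(B) entrywise, is a partial order and makes S_{m,n} a distributive lattice: for A, A' ∈ S_{m,n}, the unique matrix C with Σ(C) = max{Σ(A), Σ(A')} (entrywise maximum) is again a sign-restricted matrix and is the greatest lower bound of A and A' in the Bruhat order. -/
/-!
Padding `Σ(A)` with a zero row and column in front turns it into a function `T` on
`{0,…,m} × {0,…,n}`, vanishing on row and column `0`, from which `A` is recovered by second
differences. `A` is sign-restricted exactly when `T` grows by `0` or `1` at each step along a row
(partial column sums) and is nondecreasing down each column (partial row sums); the `{0, 1, -1}`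
condition on entries follows from the first. Both conditions survive a pointwise maximum, so
`max Σ(A) Σ(A')` is again the sum matrix of a sign-restricted matrix, and it is the meet because
`Σ` is injective.
-/
open Finset

/-- The sum-matrix: (i,j)-entry is the sum of entries of the leading i×j submatrix. -/
def sumMatrix {m n : ℕ} (A : Matrix (Fin m) (Fin n) ℤ) : Matrix (Fin m) (Fin n) ℤ :=
  fun i j => ∑ p ∈ Finset.Iic i, ∑ q ∈ Finset.Iic j, A p q

theorem Fin.sum_Iic_eq_sum_range {M : Type*} [AddCommMonoid M] {m : ℕ} (f : Fin m → M)
    (g : ℕ → M) (hfg : ∀ k : Fin m, g k = f k) (i : Fin m) :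
    ∑ k ∈ Iic i, f k = ∑ p ∈ range (i + 1), g p := by
  rw [Nat.range_succ_eq_Iic, ← Fin.map_valEmbedding_Iic, sum_map]
  exact sum_congr rfl fun k _ => (hfg k).symm

variable {m n : ℕ}

def extendByZero (A : Matrix (Fin m) (Fin n) ℤ) (p q : ℕ) : ℤ :=
  if h : p < m ∧ q < n then A ⟨p, h.1⟩ ⟨q, h.2⟩ else 0

@[simp]
lemma extendByZero_apply (A : Matrix (Fin m) (Fin n) ℤ) (i : Fin m) (j : Fin n) :
    extendByZero A i j = A i j := by
  simp [extendByZero]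

/-- `sumMatrix` shifted by one index, padded with a zero row and column `0`. -/
def cornerSum (A : Matrix (Fin m) (Fin n) ℤ) (i j : ℕ) : ℤ :=
  ∑ p ∈ range i, ∑ q ∈ range j, extendByZero A p q

section cornerSum

variable (A : Matrix (Fin m) (Fin n) ℤ)

@[simp]
lemma cornerSum_zero_left (j : ℕ) : cornerSum A 0 j = 0 := by simp [cornerSum]

@[simp]
lemma cornerSum_zero_right (i : ℕ) : cornerSum A i 0 = 0 := by simp [cornerSum]

lemma cornerSum_succ_left (i j : ℕ) :
    cornerSum A (i + 1) j = cornerSum A i j + ∑ q ∈ range j, extendByZero A i q :=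
  sum_range_succ _ _

lemma cornerSum_succ_right (i j : ℕ) :
    cornerSum A i (j + 1) = cornerSum A i j + ∑ p ∈ range i, extendByZero A p j := by
  simp only [cornerSum, sum_range_succ, sum_add_distrib]

lemma cornerSum_succ_succ (i : Fin m) (j : Fin n) :
    cornerSum A (i + 1) (j + 1) = sumMatrix A i j := by
  refine (Fin.sum_Iic_eq_sum_range _ _ (fun k => ?_) i).symm
  exact (Fin.sum_Iic_eq_sum_range _ _ (extendByZero_apply A k) j).symm

end cornerSum

def ofCornerSum (T : ℕ → ℕ → ℤ) : Matrix (Fin m) (Fin n) ℤ :=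
  fun i j => T (i + 1) (j + 1) - T (i + 1) j - T i (j + 1) + T i j

lemma ofCornerSum_congr {T T' : ℕ → ℕ → ℤ} (h : ∀ i ≤ m, ∀ j ≤ n, T i j = T' i j) :
    (ofCornerSum T : Matrix (Fin m) (Fin n) ℤ) = ofCornerSum T' := by
  ext i j
  have hi := i.isLt
  have hj := j.isLt
  simp only [ofCornerSum, h (i + 1) hi (j + 1) hj, h (i + 1) hi j hj.le, h i hi.le (j + 1) hj,
    h i hi.le j hj.le]

lemma ofCornerSum_cornerSum (A : Matrix (Fin m) (Fin n) ℤ) : ofCornerSum (cornerSum A) = A := by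
  ext i j
  simp only [ofCornerSum, cornerSum_succ_left, sum_range_succ, extendByZero_apply]
  ring

theorem sumMatrix_injective : Function.Injective (sumMatrix : Matrix (Fin m) (Fin n) ℤ → _) := by
  intro X Y h
  rw [← ofCornerSum_cornerSum X, ← ofCornerSum_cornerSum Y]
  refine ofCornerSum_congr fun i hi j hj => ?_
  cases i with
  | zero => simp
  | succ i =>
    cases j with
    | zero => simp
    | succ j =>
      simpa only [← cornerSum_succ_succ] using congrFun₂ h ⟨i, hi⟩ ⟨j, hj⟩

section ofCornerSum

variable {T : ℕ → ℕ → ℤ}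

lemma sum_Iic_ofCornerSum_col (hT : ∀ j, T 0 j = 0) (i : Fin m) (j : Fin n) :
    ∑ k ∈ Iic i, ofCornerSum T k j = T (i + 1) (j + 1) - T (i + 1) j := by
  rw [Fin.sum_Iic_eq_sum_range _
      (fun p => (T (p + 1) (j + 1) - T (p + 1) j) - (T p (j + 1) - T p j))
      (fun k => by simp only [ofCornerSum]; ring),
    sum_range_sub (fun p => T p (j + 1) - T p j), hT, hT, sub_zero, sub_zero]

lemma sum_Iic_ofCornerSum_row (hT : ∀ i, T i 0 = 0) (i : Fin m) (j : Fin n) :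
    ∑ l ∈ Iic j, ofCornerSum T i l = T (i + 1) (j + 1) - T i (j + 1) := by
  rw [Fin.sum_Iic_eq_sum_range _
      (fun q => (T (i + 1) (q + 1) - T i (q + 1)) - (T (i + 1) q - T i q))
      (fun l => by simp only [ofCornerSum]; ring),
    sum_range_sub (fun q => T (i + 1) q - T i q), hT, hT, sub_zero, sub_zero]

lemma sumMatrix_ofCornerSum (hT₀ : ∀ j, T 0 j = 0) (hT₀' : ∀ i, T i 0 = 0) (i : Fin m) (j : Fin n) :
    sumMatrix (ofCornerSum T) i j = T (i + 1) (j + 1) := by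
  simp only [sumMatrix, sum_Iic_ofCornerSum_row hT₀']
  rw [Fin.sum_Iic_eq_sum_range _ (fun p => T (p + 1) (j + 1) - T p (j + 1)) (fun _ => rfl),
    sum_range_sub (fun p => T p (j + 1)), hT₀, sub_zero]

theorem isSRM_ofCornerSum (hT₀ : ∀ j, T 0 j = 0) (hT₀' : ∀ i, T i 0 = 0)
    (hcol : ∀ i ≤ m, ∀ j < n, T i (j + 1) ∈ Set.Icc (T i j) (T i j + 1))
    (hrow : ∀ i < m, ∀ j ≤ n, T i j ≤ T (i + 1) j) :
    IsSRM (ofCornerSum T : Matrix (Fin m) (Fin n) ℤ) := by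
  refine ⟨fun i j => ?_, fun i j => ?_, fun i j => ?_⟩
  · obtain ⟨h₁, h₂⟩ := hcol i i.isLt.le j j.isLt
    obtain ⟨h₃, h₄⟩ := hcol (i + 1) i.isLt j j.isLt
    simp only [ofCornerSum]
    omega
  · rw [sum_Iic_ofCornerSum_col hT₀]
    obtain ⟨h₁, h₂⟩ := hcol (i + 1) i.isLt j j.isLt
    omega
  · rw [sum_Iic_ofCornerSum_row hT₀']
    exact sub_nonneg.2 (hrow i i.isLt (j + 1) j.isLt)

end ofCornerSum

namespace IsSRM

variable {A : Matrix (Fin m) (Fin n) ℤ} (hA : IsSRM A)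
include hA

lemma cornerSum_succ_right_mem_Icc {i j : ℕ} (hi : i ≤ m) (hj : j < n) :
    cornerSum A i (j + 1) ∈ Set.Icc (cornerSum A i j) (cornerSum A i j + 1) := by
  rw [cornerSum_succ_right, Set.mem_Icc]
  suffices h : ∑ p ∈ range i, extendByZero A p j = 0 ∨ ∑ p ∈ range i, extendByZero A p j = 1 by
    omega
  cases i with
  | zero => simp
  | succ i =>
    rw [← Fin.sum_Iic_eq_sum_range (fun k => A k ⟨j, hj⟩) _
      (fun k => extendByZero_apply A k ⟨j, hj⟩) ⟨i, hi⟩]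
    exact hA.2.1 _ _

lemma cornerSum_le_cornerSum_succ_left {i j : ℕ} (hi : i < m) (hj : j ≤ n) :
    cornerSum A i j ≤ cornerSum A (i + 1) j := by
  rw [cornerSum_succ_left, le_add_iff_nonneg_right]
  cases j with
  | zero => simp
  | succ j =>
    rw [← Fin.sum_Iic_eq_sum_range (fun l => A ⟨i, hi⟩ l) _ (fun l => extendByZero_apply A _ l)
      ⟨j, hj⟩]
    exact hA.2.2 _ _

end IsSRM

/-- for SRMs A, A', the unique matrix C whose sum-matrix is the entrywise
maximum of those of A and A' is again an SRM, and C is the greatest lower bound of A and A'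
in the Bruhat order (A ≤_B B iff Σ(A) ≥ Σ(B) entrywise); hence S_{m,n} is a lattice
(indeed distributive, meets being given by entrywise max of sum-matrices). -/
theorem stmt12 (m n : ℕ) (A A' : Matrix (Fin m) (Fin n) ℤ)
    (hA : IsSRM A) (hA' : IsSRM A') :
    ∃! C : Matrix (Fin m) (Fin n) ℤ,
      IsSRM C ∧
      (∀ i j, sumMatrix C i j = max (sumMatrix A i j) (sumMatrix A' i j)) ∧
      (∀ i j, sumMatrix A i j ≤ sumMatrix C i j) ∧
      (∀ i j, sumMatrix A' i j ≤ sumMatrix C i j) ∧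
      (∀ D : Matrix (Fin m) (Fin n) ℤ, IsSRM D →
        (∀ i j, sumMatrix A i j ≤ sumMatrix D i j) →
        (∀ i j, sumMatrix A' i j ≤ sumMatrix D i j) →
        (∀ i j, sumMatrix C i j ≤ sumMatrix D i j)) := by
  set T : ℕ → ℕ → ℤ := fun i j => max (cornerSum A i j) (cornerSum A' i j)
  have hT₀ : ∀ j, T 0 j = 0 := by simp [T]
  have hT₀' : ∀ i, T i 0 = 0 := by simp [T]
  have hsum : ∀ i j, sumMatrix (ofCornerSum T) i j = max (sumMatrix A i j) (sumMatrix A' i j) := by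
    intro i j
    rw [sumMatrix_ofCornerSum hT₀ hT₀', ← cornerSum_succ_succ, ← cornerSum_succ_succ]
  have hSRM : IsSRM (ofCornerSum T : Matrix (Fin m) (Fin n) ℤ) := by
    refine isSRM_ofCornerSum hT₀ hT₀' (fun i hi j hj => ?_) (fun i hi j hj => ?_)
    · obtain ⟨h₁, h₂⟩ := hA.cornerSum_succ_right_mem_Icc hi hj
      obtain ⟨h₃, h₄⟩ := hA'.cornerSum_succ_right_mem_Icc hi hj
      simp only [T, Set.mem_Icc]
      omega
    · exact max_le_max (hA.cornerSum_le_cornerSum_succ_left hi hj)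
        (hA'.cornerSum_le_cornerSum_succ_left hi hj)
  refine ⟨ofCornerSum T, ⟨hSRM, hsum, fun i j => ?_, fun i j => ?_, fun D _ hD hD' i j => ?_⟩, ?_⟩
  · exact (le_max_left _ _).trans_eq (hsum i j).symm
  · exact (le_max_right _ _).trans_eq (hsum i j).symm
  · exact (hsum i j).trans_le (max_le (hD i j) (hD' i j))
  · rintro C ⟨-, hC, -⟩
    exact sumMatrix_injective (funext₂ fun i j => (hC i j).trans (hsum i j).symm)
end

section
/- Let X_n be the set of nonzero vectors x ∈ {0,1,−1}^n in which, ignoring zeros, the nonzero entries alternate between 1 and −1 and the first nonzero entry is 1. Then every vector in X_n is an extreme point of the convex hull of X_n. -/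
open Finset

/-- The set X_n of nonzero (0,±1)-vectors whose nonzero entries, read in order,
alternate between 1 and −1 starting with 1. -/
def altSet (n : ℕ) : Set (Fin n → ℝ) :=
  {x | x ≠ 0 ∧ (∀ i, x i = 0 ∨ x i = 1 ∨ x i = -1) ∧
    (∀ i, x i ≠ 0 → (∀ k < i, x k = 0) → x i = 1) ∧
    (∀ i i', i < i' → x i ≠ 0 → x i' ≠ 0 → (∀ k, i < k → k < i' → x k = 0) →
      x i' = -x i)}

/-!
The partial sums `S_j(y) = y_0 + ⋯ + y_{j-1}` are linear functionals, and on `X_n` they only take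
the values `0` and `1`, since the nonzero entries alternate starting with `1`. Hence every `S_j` maps the convex hull of `X_n` into `[0, 1]`, so
`y ↦ (S_j(y))_j` sends the hull into a cube and `x ∈ X_n` to a vertex of it. Since `y` is recovered
from its partial sums, `x` is an extreme point of the hull.
-/

theorem mem_extremePoints_of_injective_of_mapsTo {𝕜 E F : Type*} [Ring 𝕜] [PartialOrder 𝕜]
    [IsOrderedRing 𝕜] [AddCommGroup E] [Module 𝕜 E] [AddCommGroup F] [Module 𝕜 F]
    {f : E →ₗ[𝕜] F} (hf : Function.Injective f) {A : Set E} {C : Set F}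
    (hAC : Set.MapsTo f A C) {x : E} (hx : x ∈ A) (hfx : f x ∈ C.extremePoints 𝕜) :
    x ∈ A.extremePoints 𝕜 := by
  refine ⟨hx, fun u hu v hv hxuv ↦ ?_⟩
  have hfxuv : f x ∈ openSegment 𝕜 (f u) (f v) :=
    image_openSegment 𝕜 f.toAffineMap u v ▸ Set.mem_image_of_mem f hxuv
  exact hf (hfx.2 (hAC hu) (hAC hv) hfxuv)

section PrefixSum

variable {R : Type*} {n : ℕ}

variable (R n) in
def prefixSum [Semiring R] : (Fin n → R) →ₗ[R] ℕ → R :=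
  LinearMap.pi fun j ↦ ∑ i : Fin n with i.val < j, LinearMap.proj (R := R) (φ := fun _ ↦ R) i

theorem prefixSum_apply [Semiring R] (y : Fin n → R) (j : ℕ) :
    prefixSum R n y j = ∑ i : Fin n with i.val < j, y i := by
  simp [prefixSum]

theorem prefixSum_zero [Semiring R] (y : Fin n → R) : prefixSum R n y 0 = 0 := by
  simp [prefixSum_apply]

theorem prefixSum_succ [Semiring R] (y : Fin n → R) (p : Fin n) :
    prefixSum R n y (p + 1) = prefixSum R n y p + y p := by
  have : univ.filter (fun i : Fin n ↦ i.val < p + 1) =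
      insert p (univ.filter fun i : Fin n ↦ i.val < p) := by
    ext i
    simp only [mem_filter, mem_univ, true_and, mem_insert, Fin.ext_iff]
    omega
  rw [prefixSum_apply, prefixSum_apply, this, sum_insert (by simp), add_comm]

theorem prefixSum_succ_of_le [Semiring R] (y : Fin n → R) {j : ℕ} (hj : n ≤ j) :
    prefixSum R n y (j + 1) = prefixSum R n y j := by
  rw [prefixSum_apply, prefixSum_apply]
  congr 1
  ext i
  simp only [mem_filter, mem_univ, true_and]
  omega

theorem prefixSum_injective [Ring R] : Function.Injective (prefixSum R n) := by
  intro y z hyz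
  ext i
  have := congrArg (fun s ↦ s (i + 1) - s i) hyz
  simpa [prefixSum_succ] using this

end PrefixSum

/-- Running through `x ∈ X_n` from the left, the next nonzero entry after position `j` is `1`
when the sum of the entries before `j` is `0`, and `-1` when that sum is `1`. -/
theorem prefixSum_altSet {n : ℕ} {x : Fin n → ℝ} (hx : x ∈ altSet n) (j : ℕ) :
    (prefixSum ℝ n x j = 0 ∨ prefixSum ℝ n x j = 1) ∧
      ∀ i : Fin n, j ≤ i → x i ≠ 0 → (∀ k : Fin n, j ≤ k → k < i → x k = 0) →
        x i = 1 - 2 * prefixSum ℝ n x j := by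
  obtain ⟨-, -, hfirst, halt⟩ := hx
  induction j with
  | zero =>
    refine ⟨.inl (prefixSum_zero x), fun i _ hi hgap ↦ ?_⟩
    rw [prefixSum_zero, hfirst i hi fun k hk ↦ hgap k (Nat.zero_le _) hk]
    ring
  | succ j ih =>
    obtain ⟨hS, hnext⟩ := ih
    rcases le_or_gt n j with hj | hj
    · rw [prefixSum_succ_of_le x hj]
      exact ⟨hS, fun i hi ↦ absurd i.isLt (by omega)⟩
    obtain ⟨p, rfl⟩ : ∃ p : Fin n, (p : ℕ) = j := ⟨⟨j, hj⟩, rfl⟩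
    rw [prefixSum_succ]
    by_cases hp : x p = 0
    · rw [hp, add_zero]
      refine ⟨hS, fun i hi hxi hgap ↦ hnext i (by omega) hxi fun k hjk hki ↦ ?_⟩
      rcases eq_or_ne k p with rfl | hkp
      · exact hp
      · exact hgap k (by omega) hki
    · have hxp : x p = 1 - 2 * prefixSum ℝ n x p :=
        hnext p le_rfl hp fun k hjk hkp ↦ absurd hkp (by omega)
      refine ⟨by rcases hS with h | h <;> rw [hxp, h] <;> norm_num, fun i hi hxi hgap ↦ ?_⟩
      rw [halt p i (by omega) hp hxi fun k hpk hki ↦ hgap k (by omega) hki, hxp]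
      ring

theorem mapsTo_prefixSum_convexHull_altSet (n : ℕ) :
    Set.MapsTo (prefixSum ℝ n) (convexHull ℝ (altSet n)) (Set.univ.pi fun _ ↦ Set.Icc 0 1) := by
  refine Set.mapsTo_iff_subset_preimage.2 <| convexHull_min (fun x hx j _ ↦ ?_) <|
    (convex_pi fun _ _ ↦ convex_Icc 0 1).linear_preimage _
  rcases (prefixSum_altSet hx j).1 with h | h <;> simp [h]

/-- every vector in X_n is an extreme point of the convex hull of X_n. -/
theorem stmt16 (n : ℕ) (x : Fin n → ℝ) (hx : x ∈ altSet n) :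
    x ∈ Set.extremePoints ℝ (convexHull ℝ (altSet n)) := by
  refine mem_extremePoints_of_injective_of_mapsTo prefixSum_injective
    (mapsTo_prefixSum_convexHull_altSet n) (subset_convexHull ℝ _ hx) ?_
  rw [extremePoints_pi, Set.mem_univ_pi]
  intro j
  rw [Set.extremePoints_Icc zero_le_one]
  exact (prefixSum_altSet hx j).1
end
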